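/- arXiv:2201.00980 — 4 statements merged into one kernel-verified Lean document; each statement's English description precedes it below -/
import Mathlib

section
/- Let X be a d-dimensional vector space over ℂ, τ_1,…,τ_n ∈ X, f_1,…,f_n ∈ X*, and suppose the frame operator S x = Σ_j f_j(x) τ_j is diagonalizable with nonnegative real eigenvalues. Then Σ_{j=1}^n Σ_{k=1}^n f_j(τ_k) f_k(τ_j) ≥ (1/d) (Σ_{j=1}^n f_j(τ_j))^2. -/
/-! Both sides are traces: `∑ j, f j (τ j) = tr S = ∑ λᵢ` and the double sum is `tr S² = ∑ λᵢ²`,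
computed once from the rank-one decomposition of `S` and once in its eigenbasis. The inequality
is then Cauchy–Schwarz `(∑ λᵢ)² ≤ d ∑ λᵢ²` for the real eigenvalues. -/

open ComplexOrder

namespace LinearMap

variable {R M ι : Type*} [CommRing R] [AddCommGroup M] [Module R M]

theorem trace_eq_sum_of_eigenbasis [Fintype ι] [DecidableEq ι] (b : Module.Basis ι R M)
    (μ : ι → R) {T : M →ₗ[R] M} (hT : ∀ i, T (b i) = μ i • b i) :
    trace R M T = ∑ i, μ i := by
  rw [trace_eq_matrix_trace R b, Matrix.trace]
  refine Finset.sum_congr rfl fun i _ => ?_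
  simp [toMatrix_apply, hT]

variable [Module.Free R M] [Module.Finite R M] {n : Type*} [Fintype n]

theorem trace_sum_smulRight (f : n → Module.Dual R M) (τ : n → M) :
    trace R M (∑ j, (f j).smulRight (τ j)) = ∑ j, f j (τ j) := by
  simp [map_sum]

theorem trace_sum_smulRight_comp_self (f : n → Module.Dual R M) (τ : n → M) :
    trace R M ((∑ j, (f j).smulRight (τ j)) ∘ₗ ∑ k, (f k).smulRight (τ k)) =
      ∑ j, ∑ k, f j (τ k) * f k (τ j) := by
  have hcomp : (∑ j, (f j).smulRight (τ j)) ∘ₗ ∑ k, (f k).smulRight (τ k) =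
      ∑ j, ∑ k, (f k).smulRight (f j (τ k) • τ j) := by
    ext x
    simp [Finset.sum_smul, smul_smul, mul_comm]
  simp only [hcomp, map_sum, trace_smulRight, map_smul, smul_eq_mul]

end LinearMap

theorem Complex.one_div_card_mul_sq_sum_le_sum_sq {ι : Type*} [Fintype ι] (x : ι → ℝ) :
    1 / (Fintype.card ι : ℂ) * (∑ i, (x i : ℂ)) ^ 2 ≤ ∑ i, (x i : ℂ) ^ 2 := by
  have hreal : 1 / (Fintype.card ι : ℝ) * (∑ i, x i) ^ 2 ≤ ∑ i, x i ^ 2 := by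
    rw [one_div_mul_eq_div]
    exact div_le_of_le_mul₀ (by positivity) (by positivity) (by
      simpa [mul_comm] using sq_sum_le_card_mul_sum_sq (s := Finset.univ) (f := x))
  have hcast := Complex.real_le_real.mpr hreal
  push_cast at hcast
  exact hcast

theorem welch_double_sum_lower_general {X : Type*} [AddCommGroup X] [Module ℂ X] [FiniteDimensional ℂ X]
    (d n : ℕ)
    (τ : Fin n → X) (f : Fin n → Module.Dual ℂ X)
    (S : X →ₗ[ℂ] X) (hS : S = ∑ j, LinearMap.smulRight (f j) (τ j))
    (hdiag : ∃ (b : Module.Basis (Fin d) ℂ X) (lam : Fin d → ℝ),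
      (∀ i, 0 ≤ lam i) ∧ ∀ i, S (b i) = (lam i : ℂ) • b i) :
    (1 / (d : ℂ)) * (∑ j, f j (τ j)) ^ 2 ≤ ∑ j, ∑ k, f j (τ k) * f k (τ j) := by
  obtain ⟨b, lam, -, hb⟩ := hdiag
  have hSS : ∀ i, (S ∘ₗ S) (b i) = (lam i : ℂ) ^ 2 • b i := fun i => by
    rw [LinearMap.comp_apply, hb, map_smul, hb, smul_smul, sq]
  rw [← LinearMap.trace_sum_smulRight, ← LinearMap.trace_sum_smulRight_comp_self, ← hS,
    LinearMap.trace_eq_sum_of_eigenbasis b _ hb, LinearMap.trace_eq_sum_of_eigenbasis b _ hSS]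
  simpa using Complex.one_div_card_mul_sq_sum_le_sum_sq lam

/-- If the frame operator `S x = ∑ j, f j x • τ j` on a `d`-dimensional complex space is
diagonalizable with nonnegative real eigenvalues, then
`∑ j ∑ k, f j (τ k) * f k (τ j) ≥ (1/d) (∑ j, f j (τ j))^2`. -/
theorem welch_double_sum_lower {X : Type*} [AddCommGroup X] [Module ℂ X] [FiniteDimensional ℂ X]
    (d n : ℕ) (hd : Module.finrank ℂ X = d) (hd1 : 1 ≤ d)
    (τ : Fin n → X) (f : Fin n → Module.Dual ℂ X)
    (S : X →ₗ[ℂ] X) (hS : S = ∑ j, LinearMap.smulRight (f j) (τ j))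
    (hdiag : ∃ (b : Module.Basis (Fin d) ℂ X) (lam : Fin d → ℝ),
      (∀ i, 0 ≤ lam i) ∧ ∀ i, S (b i) = (lam i : ℂ) • b i) :
    (1 / (d : ℂ)) * (∑ j, f j (τ j)) ^ 2 ≤ ∑ j, ∑ k, f j (τ k) * f k (τ j) :=
  welch_double_sum_lower_general d n τ f S hS hdiag
end

section
/- Let X be a d-dimensional complex vector space, n ≥ d, τ_1,…,τ_n ∈ X and f_1,…,f_n ∈ X* with f_j(τ_j) = 1 for all j. If the frame operator S x = Σ_j f_j(x) τ_j is diagonalizable with nonnegative real eigenvalues, then max_{j ≠ k} |f_j(τ_k) f_k(τ_j)| ≥ (n − d)/(d(n − 1)). -/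
/-!
Both traces of the frame operator `S` can be read off in two ways. The frame expansion gives
`tr S = ∑ f_j(τ_j) = n` and `tr S² = ∑_{j,k} f_j(τ_k) f_k(τ_j) = n + ∑_{j ≠ k} f_j(τ_k) f_k(τ_j)`,
while an eigenbasis gives `tr S = ∑ λ_i` and `tr S² = ∑ λ_i²` with real `λ_i`. Cauchy–Schwarz
`n² = (∑ λ_i)² ≤ d ∑ λ_i²` bounds the off-diagonal sum from below by `n² / d - n`, and from above
it is at most `n (n - 1)` times the largest off-diagonal product.
-/

open LinearMap Finset

section Trace

variable {R M : Type*} [CommRing R] [AddCommGroup M] [Module R M]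

theorem LinearMap.trace_eq_sum_of_apply_basis {ι : Type*} [Fintype ι] [DecidableEq ι]
    (b : Module.Basis ι R M) {T : M →ₗ[R] M} {μ : ι → R} (hT : ∀ i, T (b i) = μ i • b i) :
    trace R M T = ∑ i, μ i := by
  rw [trace_eq_matrix_trace R b T, Matrix.trace]
  refine sum_congr rfl fun i _ => ?_
  simp [LinearMap.toMatrix_apply, hT]

variable [Module.Free R M] [Module.Finite R M] {ι : Type*} [Fintype ι]
  (f : ι → Module.Dual R M) (τ : ι → M)

theorem LinearMap.trace_sum_smulRight_s5 :
    trace R M (∑ j, (f j).smulRight (τ j)) = ∑ j, f j (τ j) := by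
  simp [map_sum]

theorem LinearMap.trace_sum_smulRight_mul_self :
    trace R M ((∑ j, (f j).smulRight (τ j)) * ∑ j, (f j).smulRight (τ j)) =
      ∑ j, ∑ k, f j (τ k) * f k (τ j) := by
  have hmul : ∀ j k, (f j).smulRight (τ j) * (f k).smulRight (τ k) =
      (f j (τ k) • f k).smulRight (τ j) := by
    intro j k
    ext x
    simp [smul_smul, mul_comm]
  simp only [sum_mul_sum, hmul, map_sum, trace_smulRight, smul_apply, smul_eq_mul]

end Trace

section OffDiag

variable {ι : Type*} [Fintype ι]

theorem Finset.sum_sum_eq_sum_add_sum_offDiag [DecidableEq ι] {A : Type*} [AddCommMonoid A]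
    (a : ι → ι → A) :
    ∑ j, ∑ k, a j k = ∑ j, a j j + ∑ p ∈ univ.offDiag, a p.1 p.2 := by
  rw [← sum_product', ← diag_union_offDiag, sum_union (disjoint_diag_offDiag _), sum_diag]

theorem norm_sum_offDiag_le {E : Type*} [SeminormedAddCommGroup E] (a : ι × ι → E) :
    ‖∑ p ∈ univ.offDiag, a p‖ ≤
      (Fintype.card ι * (Fintype.card ι - 1) : ℝ) * ⨆ p : {q : ι × ι // q.1 ≠ q.2}, ‖a p‖ := by
  have hle : ∀ p ∈ (univ : Finset ι).offDiag, ‖a p‖ ≤ ⨆ p : {q : ι × ι // q.1 ≠ q.2}, ‖a p‖ :=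
    fun p hp => le_ciSup (f := fun p : {q : ι × ι // q.1 ≠ q.2} => ‖a p‖)
      (Set.finite_range _).bddAbove ⟨p, (mem_offDiag.mp hp).2.2⟩
  calc ‖∑ p ∈ univ.offDiag, a p‖ ≤ ∑ p ∈ univ.offDiag, ‖a p‖ := norm_sum_le _ _
    _ ≤ #(univ : Finset ι).offDiag • ⨆ p : {q : ι × ι // q.1 ≠ q.2}, ‖a p‖ :=
      sum_le_card_nsmul _ _ _ hle
    _ = _ := by
      rw [nsmul_eq_mul, offDiag_card, card_univ, Nat.cast_sub (Nat.le_mul_self _)]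
      push_cast
      ring

end OffDiag

theorem div_le_of_sum_eq_of_sum_sq_le {ι : Type*} [Fintype ι] (lam : ι → ℝ) {n m : ℝ}
    (hsum : ∑ i, lam i = n) (hsq : ∑ i, lam i ^ 2 ≤ n + n * (n - 1) * m)
    (hι : 0 < Fintype.card ι) (hn : 1 < n) :
    (n - Fintype.card ι) / (Fintype.card ι * (n - 1)) ≤ m := by
  have hcs : n ^ 2 ≤ Fintype.card ι * ∑ i, lam i ^ 2 := by
    simpa [hsum] using sq_sum_le_card_mul_sum_sq (s := univ) (f := lam)
  have hcard : (0 : ℝ) < Fintype.card ι := by exact_mod_cast hι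
  rw [div_le_iff₀ (by positivity)]
  nlinarith

theorem welch_first_order_product_general {X : Type*} [AddCommGroup X] [Module ℂ X]
    [FiniteDimensional ℂ X]
    (d n : ℕ) (hd1 : 1 ≤ d) (hn2 : 2 ≤ n)
    (τ : Fin n → X) (f : Fin n → Module.Dual ℂ X)
    (hone : ∀ j, f j (τ j) = 1)
    (S : X →ₗ[ℂ] X) (hS : S = ∑ j, LinearMap.smulRight (f j) (τ j))
    (hdiag : ∃ (b : Module.Basis (Fin d) ℂ X) (lam : Fin d → ℝ),
      (∀ i, 0 ≤ lam i) ∧ ∀ i, S (b i) = (lam i : ℂ) • b i) :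
    ((n : ℝ) - d) / (d * ((n : ℝ) - 1)) ≤
      ⨆ p : {q : Fin n × Fin n // q.1 ≠ q.2},
        ‖f p.1.1 (τ p.1.2) * f p.1.2 (τ p.1.1)‖ := by
  obtain ⟨b, lam, -, hlam⟩ := hdiag
  have hlam2 : ∀ i, (S * S) (b i) = ((lam i : ℂ) ^ 2) • b i := fun i => by
    rw [Module.End.mul_apply, hlam, map_smul, hlam, smul_smul, sq]
  set off := ∑ p ∈ univ.offDiag, f p.1 (τ p.2) * f p.2 (τ p.1)
  have htr : ((∑ i, lam i : ℝ) : ℂ) = n := by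
    push_cast
    rw [← trace_eq_sum_of_apply_basis b hlam, hS, trace_sum_smulRight_s5]
    simp [hone]
  have htr2 : ((∑ i, lam i ^ 2 : ℝ) : ℂ) = n + off := by
    push_cast
    rw [← trace_eq_sum_of_apply_basis b hlam2, hS,
      trace_sum_smulRight_mul_self, sum_sum_eq_sum_add_sum_offDiag]
    simp [hone, off]
  have hsq : ∑ i, lam i ^ 2 ≤ n + n * (n - 1) *
      ⨆ p : {q : Fin n × Fin n // q.1 ≠ q.2}, ‖f p.1.1 (τ p.1.2) * f p.1.2 (τ p.1.1)‖ :=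
    calc ∑ i, lam i ^ 2 = ((∑ i, lam i ^ 2 : ℝ) : ℂ).re := (Complex.ofReal_re _).symm
      _ = n + off.re := by simp only [htr2, Complex.add_re, Complex.natCast_re]
      _ ≤ n + ‖off‖ := by gcongr; exact Complex.re_le_norm off
      _ ≤ _ := by
        gcongr
        simpa using norm_sum_offDiag_le fun p => f p.1 (τ p.2) * f p.2 (τ p.1)
  have hsum : ∑ i, lam i = n := by exact_mod_cast htr
  simpa using div_le_of_sum_eq_of_sum_sq_le lam hsum hsq (by rw [Fintype.card_fin]; omega)
    (by exact_mod_cast hn2)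

/-- First order Welch bound for Banach spaces (product form): if `f j (τ j) = 1` for all `j`
and the frame operator is diagonalizable with nonnegative real eigenvalues, then
`max_{j ≠ k} |f j (τ k) * f k (τ j)| ≥ (n - d)/(d (n - 1))`. -/
theorem welch_first_order_product {X : Type*} [AddCommGroup X] [Module ℂ X]
    [FiniteDimensional ℂ X]
    (d n : ℕ) (hd : Module.finrank ℂ X = d) (hd1 : 1 ≤ d) (hdn : d ≤ n) (hn2 : 2 ≤ n)
    (τ : Fin n → X) (f : Fin n → Module.Dual ℂ X)
    (hone : ∀ j, f j (τ j) = 1)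
    (S : X →ₗ[ℂ] X) (hS : S = ∑ j, LinearMap.smulRight (f j) (τ j))
    (hdiag : ∃ (b : Module.Basis (Fin d) ℂ X) (lam : Fin d → ℝ),
      (∀ i, 0 ≤ lam i) ∧ ∀ i, S (b i) = (lam i : ℂ) • b i) :
    ((n : ℝ) - d) / (d * ((n : ℝ) - 1)) ≤
      ⨆ p : {q : Fin n × Fin n // q.1 ≠ q.2},
        ‖f p.1.1 (τ p.1.2) * f p.1.2 (τ p.1.1)‖ :=
  welch_first_order_product_general d n hd1 hn2 τ f hone S hS hdiag
end

section
/- Let X be a d-dimensional complex vector space, n ≥ d, τ_1,…,τ_n ∈ X and f_1,…,f_n ∈ X* with f_j(τ_j) = 1 for all j. If the frame operator S x = Σ_j f_j(x) τ_j is diagonalizable with nonnegative real eigenvalues, then max_{j ≠ k} |f_j(τ_k)| ≥ √((n − d)/(d(n − 1))). (First order Welch bound for Banach spaces.) -/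
/-!
Compute the traces of `S` and `S²` in two ways. In the eigenbasis they are `∑ λᵢ` and `∑ λᵢ²`;
from the rank-one decomposition of `S` they are `∑ⱼ fⱼ(τⱼ) = n` and
`∑ⱼₖ fⱼ(τₖ) fₖ(τⱼ) = n + ∑_{j ≠ k} fⱼ(τₖ) fₖ(τⱼ)`. Cauchy–Schwarz gives `n² ≤ d ∑ λᵢ²`, and the
off-diagonal sum has modulus at most `n (n - 1) M²`, where `M = max_{j ≠ k} |fⱼ(τₖ)|`. Hence
`n² ≤ d (n + n (n - 1) M²)`, which rearranges to the bound.
-/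

open Finset

namespace LinearMap

variable {R M ι : Type*} [CommRing R] [AddCommGroup M] [Module R M]

lemma toMatrix_eq_diagonal_of_apply_eq_smul [Fintype ι] [DecidableEq ι]
    (b : Module.Basis ι R M) {T : M →ₗ[R] M} {μ : ι → R} (hT : ∀ i, T (b i) = μ i • b i) :
    toMatrix b b T = Matrix.diagonal μ := by
  ext i j
  rcases eq_or_ne i j with rfl | hij
  · simp [toMatrix_apply, hT]
  · simp [toMatrix_apply, hT, hij]

lemma trace_pow_eq_sum_pow_of_apply_eq_smul [Fintype ι] [DecidableEq ι]
    (b : Module.Basis ι R M) {T : M →ₗ[R] M} {μ : ι → R} (hT : ∀ i, T (b i) = μ i • b i)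
    (k : ℕ) : trace R M (T ^ k) = ∑ i, μ i ^ k := by
  rw [trace_eq_matrix_trace R b, ← toMatrix_pow, toMatrix_eq_diagonal_of_apply_eq_smul b hT,
    Matrix.diagonal_pow, Matrix.trace_diagonal]
  rfl

lemma smulRight_mul_smulRight (f g : Module.Dual R M) (x y : M) :
    f.smulRight x * g.smulRight y = g.smulRight (f y • x) := by
  ext z
  simp [smul_smul, mul_comm]

end LinearMap

lemma Finset.sum_sum_eq_sum_diag_add_sum_offDiag {ι β : Type*} [Fintype ι] [DecidableEq ι]
    [AddCommMonoid β] (g : ι → ι → β) :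
    ∑ j, ∑ k, g j k = ∑ j, g j j + ∑ q ∈ univ.offDiag, g q.1 q.2 := by
  rw [← sum_product', ← diag_union_offDiag,
    sum_union (disjoint_diag_offDiag _), sum_diag]

section Frame

variable {R M ι : Type*} [CommRing R] [AddCommGroup M] [Module R M] [Fintype ι]

def frameOperator (f : ι → Module.Dual R M) (τ : ι → M) : M →ₗ[R] M :=
  ∑ j, (f j).smulRight (τ j)

variable [Module.Free R M] [Module.Finite R M] (f : ι → Module.Dual R M) (τ : ι → M)

lemma trace_frameOperator : LinearMap.trace R M (frameOperator f τ) = ∑ j, f j (τ j) := by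
  simp [frameOperator]

lemma trace_frameOperator_sq :
    LinearMap.trace R M (frameOperator f τ ^ 2) = ∑ j, ∑ k, f j (τ k) * f k (τ j) := by
  simp [frameOperator, sq, sum_mul_sum, LinearMap.smulRight_mul_smulRight]

variable {f τ}

lemma trace_frameOperator_of_apply_eq_one (hone : ∀ j, f j (τ j) = 1) :
    LinearMap.trace R M (frameOperator f τ) = Fintype.card ι := by
  simp [trace_frameOperator, hone]

lemma trace_frameOperator_sq_of_apply_eq_one [DecidableEq ι] (hone : ∀ j, f j (τ j) = 1) :
    LinearMap.trace R M (frameOperator f τ ^ 2) =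
      Fintype.card ι + ∑ q ∈ univ.offDiag, f q.1 (τ q.2) * f q.2 (τ q.1) := by
  simp [trace_frameOperator_sq, sum_sum_eq_sum_diag_add_sum_offDiag, hone]

end Frame

lemma norm_sum_offDiag_mul_swap_le {ι 𝕜 : Type*} [Fintype ι] [DecidableEq ι]
    [SeminormedRing 𝕜] (a : ι → ι → 𝕜) {C : ℝ} (hC : ∀ j k, j ≠ k → ‖a j k‖ ≤ C) :
    ‖∑ q ∈ univ.offDiag, a q.1 q.2 * a q.2 q.1‖ ≤
      Fintype.card ι * (Fintype.card ι - 1) * C ^ 2 := by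
  have hterm : ∀ q ∈ (univ : Finset ι).offDiag, ‖a q.1 q.2 * a q.2 q.1‖ ≤ C ^ 2 := by
    intro q hq
    have hne : q.1 ≠ q.2 := (mem_offDiag.1 hq).2.2
    calc ‖a q.1 q.2 * a q.2 q.1‖ ≤ ‖a q.1 q.2‖ * ‖a q.2 q.1‖ := norm_mul_le _ _
      _ ≤ C * C := mul_le_mul (hC _ _ hne) (hC _ _ hne.symm) (norm_nonneg _)
          ((norm_nonneg _).trans (hC _ _ hne))
      _ = C ^ 2 := (sq C).symm
  calc _ ≤ ∑ q ∈ (univ : Finset ι).offDiag, C ^ 2 := norm_sum_le_of_le _ hterm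
    _ = _ := by
      rw [sum_const, offDiag_card, card_univ, nsmul_eq_mul, Nat.cast_sub (Nat.le_mul_self _)]
      push_cast
      ring

lemma Real.sqrt_div_le_of_sq_le_mul {n d C : ℝ} (hn : 1 ≤ n) (hd : 0 ≤ d) (hC : 0 ≤ C)
    (h : n ^ 2 ≤ d * (n + n * (n - 1) * C ^ 2)) :
    √((n - d) / (d * (n - 1))) ≤ C := by
  rw [Real.sqrt_le_iff]
  refine ⟨hC, div_le_of_le_mul₀ (by nlinarith) (sq_nonneg C) ?_⟩
  refine le_of_mul_le_mul_left ?_ (by linarith : 0 < n)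
  linear_combination h

theorem welch_first_order_general {X : Type*} [AddCommGroup X] [Module ℂ X]
    [FiniteDimensional ℂ X]
    (d n : ℕ) (hn2 : 2 ≤ n)
    (τ : Fin n → X) (f : Fin n → Module.Dual ℂ X)
    (hone : ∀ j, f j (τ j) = 1)
    (S : X →ₗ[ℂ] X) (hS : S = ∑ j, LinearMap.smulRight (f j) (τ j))
    (hdiag : ∃ (b : Module.Basis (Fin d) ℂ X) (lam : Fin d → ℝ),
      (∀ i, 0 ≤ lam i) ∧ ∀ i, S (b i) = (lam i : ℂ) • b i) :
    Real.sqrt (((n : ℝ) - d) / (d * ((n : ℝ) - 1))) ≤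
      ⨆ p : {q : Fin n × Fin n // q.1 ≠ q.2},
        ‖f p.1.1 (τ p.1.2)‖ := by
  obtain ⟨b, lam, -, hlam⟩ := hdiag
  change S = frameOperator f τ at hS
  set M := ⨆ p : {q : Fin n × Fin n // q.1 ≠ q.2}, ‖f p.1.1 (τ p.1.2)‖
  have hM : ∀ j k, j ≠ k → ‖f j (τ k)‖ ≤ M := fun j k hjk =>
    le_ciSup (f := fun p : {q : Fin n × Fin n // q.1 ≠ q.2} => ‖f p.1.1 (τ p.1.2)‖)
      (Set.finite_range _).bddAbove ⟨(j, k), hjk⟩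
  have hsum : ∑ i, lam i = n := by
    have h := LinearMap.trace_pow_eq_sum_pow_of_apply_eq_smul b hlam 1
    simp only [pow_one, hS, trace_frameOperator_of_apply_eq_one hone, Fintype.card_fin] at h
    exact_mod_cast h.symm
  have hsq : ∑ i, lam i ^ 2 ≤ n + n * (n - 1) * M ^ 2 := by
    have h := LinearMap.trace_pow_eq_sum_pow_of_apply_eq_smul b hlam 2
    rw [hS, trace_frameOperator_sq_of_apply_eq_one hone, Fintype.card_fin] at h
    simp only [← Complex.ofReal_pow, ← Complex.ofReal_sum] at h
    set off := ∑ q ∈ univ.offDiag, f q.1 (τ q.2) * f q.2 (τ q.1)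
    have hre := congrArg Complex.re h
    rw [Complex.add_re, Complex.natCast_re, Complex.ofReal_re] at hre
    have hoff : ‖off‖ ≤ n * (n - 1) * M ^ 2 := by
      simpa using norm_sum_offDiag_mul_swap_le (fun j k => f j (τ k)) hM
    linarith [Complex.re_le_norm off]
  refine Real.sqrt_div_le_of_sq_le_mul (by norm_cast; omega) d.cast_nonneg
    (Real.iSup_nonneg fun _ => norm_nonneg _) ?_
  calc (n : ℝ) ^ 2 = (∑ i, lam i) ^ 2 := by rw [hsum]
    _ ≤ d * ∑ i, lam i ^ 2 := by simpa using sq_sum_le_card_mul_sum_sq (s := univ) (f := lam)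
    _ ≤ d * (n + n * (n - 1) * M ^ 2) := by gcongr

/-- First order Welch bound for Banach spaces (product form): if `f j (τ j) = 1` for all `j`
and the frame operator is diagonalizable with nonnegative real eigenvalues, then
`max_{j ≠ k} |f j (τ k)| ≥ √((n - d)/(d (n - 1)))`. -/
theorem welch_first_order {X : Type*} [AddCommGroup X] [Module ℂ X]
    [FiniteDimensional ℂ X]
    (d n : ℕ) (hd : Module.finrank ℂ X = d) (hd1 : 1 ≤ d) (hdn : d ≤ n) (hn2 : 2 ≤ n)
    (τ : Fin n → X) (f : Fin n → Module.Dual ℂ X)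
    (hone : ∀ j, f j (τ j) = 1)
    (S : X →ₗ[ℂ] X) (hS : S = ∑ j, LinearMap.smulRight (f j) (τ j))
    (hdiag : ∃ (b : Module.Basis (Fin d) ℂ X) (lam : Fin d → ℝ),
      (∀ i, 0 ≤ lam i) ∧ ∀ i, S (b i) = (lam i : ℂ) • b i) :
    Real.sqrt (((n : ℝ) - d) / (d * ((n : ℝ) - 1))) ≤
      ⨆ p : {q : Fin n × Fin n // q.1 ≠ q.2},
        ‖f p.1.1 (τ p.1.2)‖ :=
  welch_first_order_general d n hn2 τ f hone S hS hdiag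
end

section
/- Let G ∈ M_n(ℂ) be diagonalizable with nonnegative real eigenvalues, with diagonal entries all equal to 1 (so trace G = n), and suppose n > rank(G). Then max_{j ≠ k} |G_{jk} G_{kj}| ≥ (n − rank G)/(rank G · (n − 1)). -/
/-!
The eigenvalues `λᵢ` of `G` are real with `∑ λᵢ = tr G = n`, and exactly `r = rank G` of them
are nonzero, so Cauchy–Schwarz gives `n² ≤ r ∑ λᵢ² = r tr (G²)`. As the diagonal of `G` is `1`,
`tr (G²) = n + ∑_{j ≠ k} G_{jk} G_{kj}`; hence the `n (n - 1)` off-diagonal products have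
absolute values summing to at least `n² / r - n`, and the largest one is at least their average
`(n - r) / (r (n - 1))`.
-/

open Finset

theorem sq_sum_le_card_filter_ne_zero_mul_sum_sq {ι R : Type*} [CommRing R] [LinearOrder R]
    [IsStrictOrderedRing R] (s : Finset ι) (f : ι → R) :
    (∑ i ∈ s, f i) ^ 2 ≤ #{i ∈ s | f i ≠ 0} * ∑ i ∈ s, f i ^ 2 := by
  have hsq : ∑ i ∈ s, f i ^ 2 = ∑ i ∈ s with f i ≠ 0, f i ^ 2 :=
    (sum_filter_of_ne fun _ _ h hf ↦ by simp [hf] at h).symm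
  rw [← sum_filter_ne_zero, hsq]
  exact sq_sum_le_card_mul_sum_sq

theorem Fintype.sum_le_card_mul_ciSup {ι : Type*} [Fintype ι] (f : ι → ℝ) :
    ∑ i, f i ≤ Fintype.card ι * ⨆ i, f i := by
  simpa using sum_le_card_nsmul univ f _ fun i _ ↦ le_ciSup (Finite.bddAbove_range f) i

theorem Fintype.card_subtype_fst_ne_snd (ι : Type*) [Fintype ι] [DecidableEq ι] :
    Fintype.card {q : ι × ι // q.1 ≠ q.2} = Fintype.card ι * (Fintype.card ι - 1) := by
  rw [Fintype.card_of_subtype univ.offDiag (by simp), offDiag_card, card_univ, Nat.mul_sub_one]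

namespace Matrix

variable {n R : Type*} [Fintype n] [DecidableEq n]

theorem trace_mul_self_eq_sum_diag_add_sum_offDiag [CommSemiring R] (A : Matrix n n R) :
    (A * A).trace =
      ∑ i, A i i ^ 2 + ∑ q : {q : n × n // q.1 ≠ q.2}, A q.1.1 q.1.2 * A q.1.2 q.1.1 := by
  have hpairs : (A * A).trace = ∑ q ∈ univ ×ˢ univ, A q.1 q.2 * A q.2 q.1 := by
    rw [univ_product_univ, Fintype.sum_prod_type]
    simp [trace, mul_apply]
  rw [hpairs, ← diag_union_offDiag, sum_union (disjoint_diag_offDiag _), sum_diag]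
  congr 1
  · simp [sq]
  · exact sum_subtype _ (by simp) _

theorem re_trace_mul_self_sub_card_le (A : Matrix n n ℂ) (hA : ∀ i, A i i = 1) :
    (A * A).trace.re - Fintype.card n ≤
      ∑ p : {q : n × n // q.1 ≠ q.2}, ‖A p.1.1 p.1.2 * A p.1.2 p.1.1‖ := by
  rw [trace_mul_self_eq_sum_diag_add_sum_offDiag]
  simp only [hA, one_pow, sum_const, card_univ, nsmul_eq_mul, mul_one, Complex.add_re,
    Complex.natCast_re, add_sub_cancel_left]
  exact (Complex.re_le_norm _).trans (norm_sum_le _ _)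

variable [CommRing R] {P : Matrix n n R}

theorem rank_conj (hP : IsUnit P.det) (A : Matrix n n R) : (P * A * P⁻¹).rank = A.rank := by
  rw [rank_mul_eq_left_of_isUnit_det _ _ (isUnit_nonsing_inv_det P hP),
    rank_mul_eq_right_of_isUnit_det _ _ hP]

theorem conj_mul_conj (hP : IsUnit P.det) (A B : Matrix n n R) :
    P * A * P⁻¹ * (P * B * P⁻¹) = P * (A * B) * P⁻¹ := by
  simp only [Matrix.mul_assoc, nonsing_inv_mul_cancel_left _ _ hP]

theorem trace_conj_diagonal (hP : IsUnit P.det) (d : n → R) :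
    (P * diagonal d * P⁻¹).trace = ∑ i, d i := by
  rw [trace_conj ((isUnit_iff_isUnit_det P).2 hP), trace_diagonal]

theorem trace_sq_conj_diagonal (hP : IsUnit P.det) (d : n → R) :
    (P * diagonal d * P⁻¹ * (P * diagonal d * P⁻¹)).trace = ∑ i, d i ^ 2 := by
  simp only [conj_mul_conj hP, diagonal_mul_diagonal, trace_conj_diagonal hP, sq]

end Matrix

theorem div_le_of_sq_le_mul_of_sub_le {r n : ℕ} {Q M : ℝ} (hrn : r < n)
    (hcs : (n : ℝ) ^ 2 ≤ r * Q) (hQ : Q - n ≤ n * (n - 1) * M) :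
    ((n : ℝ) - r) / (r * ((n : ℝ) - 1)) ≤ M := by
  have hr : 1 ≤ r := by
    by_contra! h
    obtain rfl : r = 0 := by omega
    simp only [Nat.cast_zero, zero_mul] at hcs
    have : (0 : ℝ) < n ^ 2 := by positivity
    linarith
  have hr' : (1 : ℝ) ≤ r := by exact_mod_cast hr
  have hn' : (r : ℝ) + 1 ≤ n := by exact_mod_cast hrn
  rw [div_le_iff₀ (by nlinarith)]
  nlinarith

theorem welch_gram_max_bound_general (n : ℕ) (G : Matrix (Fin n) (Fin n) ℂ)
    (hdiagonal : ∀ j, G j j = 1)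
    (hdiag : ∃ (P : Matrix (Fin n) (Fin n) ℂ) (_ : IsUnit P.det) (lam : Fin n → ℝ),
      (∀ i, 0 ≤ lam i) ∧ G = P * Matrix.diagonal (fun i => (lam i : ℂ)) * P⁻¹)
    (hrn : G.rank < n) :
    ((n : ℝ) - G.rank) / (G.rank * ((n : ℝ) - 1)) ≤
      ⨆ p : {q : Fin n × Fin n // q.1 ≠ q.2},
        ‖G p.1.1 p.1.2 * G p.1.2 p.1.1‖ := by
  obtain ⟨P, hP, lam, -, hG⟩ := hdiag
  have htrace : ∑ i, lam i = n := by
    have h : (n : ℂ) = ∑ i, (lam i : ℂ) := by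
      rw [← Matrix.trace_conj_diagonal hP, ← hG]
      simp [Matrix.trace, hdiagonal]
    exact_mod_cast h.symm
  have hrank : G.rank = #{i | lam i ≠ 0} := by
    rw [hG, Matrix.rank_conj hP, Matrix.rank_diagonal, Fintype.card_subtype]
    simp
  have hcs : (n : ℝ) ^ 2 ≤ G.rank * ∑ i, lam i ^ 2 :=
    htrace ▸ hrank ▸ sq_sum_le_card_filter_ne_zero_mul_sum_sq univ lam
  have hoff := G.re_trace_mul_self_sub_card_le hdiagonal
  rw [hG, Matrix.trace_sq_conj_diagonal hP, ← hG, Fintype.card_fin] at hoff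
  simp only [← Complex.ofReal_pow, ← Complex.ofReal_sum, Complex.ofReal_re] at hoff
  have hsup := Fintype.sum_le_card_mul_ciSup fun p : {q : Fin n × Fin n // q.1 ≠ q.2} ↦
    ‖G p.1.1 p.1.2 * G p.1.2 p.1.1‖
  rw [Fintype.card_subtype_fst_ne_snd, Fintype.card_fin, Nat.cast_mul,
    Nat.cast_pred (by omega)] at hsup
  exact div_le_of_sq_le_mul_of_sub_le hrn hcs (hoff.trans hsup)

/-- For a diagonalizable complex matrix `G` with nonnegative real eigenvalues, unit diagonal
and `n > rank G`, `max_{j ≠ k} |G j k * G k j| ≥ (n - rank G)/(rank G * (n - 1))`. -/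
theorem welch_gram_max_bound (n : ℕ) (hn2 : 2 ≤ n) (G : Matrix (Fin n) (Fin n) ℂ)
    (hdiagonal : ∀ j, G j j = 1)
    (hdiag : ∃ (P : Matrix (Fin n) (Fin n) ℂ) (_ : IsUnit P.det) (lam : Fin n → ℝ),
      (∀ i, 0 ≤ lam i) ∧ G = P * Matrix.diagonal (fun i => (lam i : ℂ)) * P⁻¹)
    (hrank : 1 ≤ G.rank) (hrn : G.rank < n) :
    ((n : ℝ) - G.rank) / (G.rank * ((n : ℝ) - 1)) ≤
      ⨆ p : {q : Fin n × Fin n // q.1 ≠ q.2},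
        ‖G p.1.1 p.1.2 * G p.1.2 p.1.1‖ :=
  welch_gram_max_bound_general n G hdiagonal hdiag hrn
end
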